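/- If the step size satisfies h ≤ c/P(Q_τ(|x_0| + ‖u‖) + ‖u‖), then the Euler iterates satisfy W(t_0+ih, x_i) ≤ exp(2cih)·W(t_0, x_0) + ∫_{t_0}^{t_0+ih} exp(2c(t_0+ih − s))·p(|u(s)|) ds for all i = 0, …, N. -/

import Mathlib

/-!
Expand `W` to second order along one Euler step, from `(t, x)` in the direction `(h, Δ)` with
`Δ = ∫ f(s, x, u(s)) ds`. Comparing `f(s, x, ·)` with `f(t, x, ·)` and using the dissipation
inequality, the first-order term `h ∂ₜW + ⟪∇W, Δ⟫` is at most `c h W + ∫ p(|u|) + h² P / 2`,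
and the second-order remainder is at most `h² (P - 1) / 2` as long as the segment stays where `P`
controls the second derivatives of `W`. With `h P ≤ c` and `W ≥ 1` this gives
`W(t + h, x + Δ) ≤ (1 + 2ch) W(t, x) + ∫ p(|u|) ≤ e^{2ch} W(t, x) + ∫ e^{2c(t+h-s)} p(|u(s)|) ds`,
and such one-step bounds chain into the exponentially weighted estimate. By definition of `Q_τ`,
the estimate at step `i` puts `x_i` in the ball of radius `Q_τ(|x₀| + ‖u‖)`, which is what the
next step needs, so induction on `i` closes the argument.
-/

open Set Filter Function InnerProductSpace Topology MeasureTheory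

noncomputable section

theorem le_add_deriv_add_half_of_deriv_le {G G' G'' : ℝ → ℝ} {K : ℝ}
    (hG : ∀ θ ∈ Icc (0:ℝ) 1, HasDerivWithinAt G (G' θ) (Icc 0 1) θ)
    (hG'c : ContinuousOn G' (Icc 0 1)) (hG' : ∀ θ ∈ Ioo (0:ℝ) 1, HasDerivAt G' (G'' θ) θ)
    (hG'' : ∀ θ ∈ Ioo (0:ℝ) 1, G'' θ ≤ K) :
    G 1 ≤ G 0 + G' 0 + K / 2 := by
  have hG'_le : ∀ θ ∈ Icc (0:ℝ) 1, G' θ - G' 0 ≤ K * (θ - 0) := fun θ hθ =>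
    (convex_Icc 0 1).image_sub_le_mul_sub_of_deriv_le hG'c
      (fun θ hθ => (hG' θ (by rwa [interior_Icc] at hθ)).differentiableAt.differentiableWithinAt)
      (fun θ hθ => by rw [interior_Icc] at hθ; rw [(hG' θ hθ).deriv]; exact hG'' θ hθ)
      0 (left_mem_Icc.2 zero_le_one) θ hθ hθ.1
  have hF : ∀ θ ∈ Ioo (0:ℝ) 1, HasDerivAt (fun θ => G θ - θ * G' 0 - K * θ ^ 2 / 2)
      (G' θ - G' 0 - K * θ) θ := fun θ hθ => by
    refine ((((hG θ (Ioo_subset_Icc_self hθ)).hasDerivAt (Icc_mem_nhds hθ.1 hθ.2)).sub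
      ((hasDerivAt_id θ).mul_const (G' 0))).sub
        (((hasDerivAt_pow 2 θ).const_mul K).div_const 2)).congr_deriv ?_
    ring
  have hFmono := (convex_Icc (0:ℝ) 1).image_sub_le_mul_sub_of_deriv_le (C := 0)
    (f := fun θ => G θ - θ * G' 0 - K * θ ^ 2 / 2)
    (((HasDerivWithinAt.continuousOn hG).sub (continuousOn_id.mul continuousOn_const)).sub
      ((continuousOn_const.mul (continuousOn_pow 2)).div_const 2))
    (fun θ hθ => (hF θ (by rwa [interior_Icc] at hθ)).differentiableAt.differentiableWithinAt)
    (fun θ hθ => by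
      rw [interior_Icc] at hθ
      rw [(hF θ hθ).deriv]
      linarith [hG'_le θ (Ioo_subset_Icc_self hθ)])
    0 (left_mem_Icc.2 zero_le_one) 1 (right_mem_Icc.2 zero_le_one) zero_le_one
  linarith

theorem integral_exp_mul_sub_mul_le {g : ℝ → ℝ} {k a b C : ℝ} (hk : 0 < k) (hab : a ≤ b)
    (hg : IntervalIntegrable g volume a b) (hgC : ∀ᵐ s ∂volume.restrict (Icc a b), g s ≤ C) :
    ∫ s in a..b, Real.exp (k * (b - s)) * g s ≤ k⁻¹ * (Real.exp (k * (b - a)) - 1) * C := by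
  have hexp : ∫ s in a..b, Real.exp (k * (b - s)) = k⁻¹ * (Real.exp (k * (b - a)) - 1) := by
    rw [intervalIntegral.integral_comp_sub_left (fun s => Real.exp (k * s)),
      intervalIntegral.integral_comp_mul_left Real.exp hk.ne', integral_exp, sub_self, mul_zero,
      Real.exp_zero, smul_eq_mul]
  calc ∫ s in a..b, Real.exp (k * (b - s)) * g s ≤ ∫ s in a..b, Real.exp (k * (b - s)) * C :=
        intervalIntegral.integral_mono_ae_restrict hab (hg.continuousOn_mul (by fun_prop))
          (Continuous.intervalIntegrable (by fun_prop) _ _) (by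
            filter_upwards [hgC] with s hs
            exact mul_le_mul_of_nonneg_left hs (Real.exp_nonneg _))
    _ = k⁻¹ * (Real.exp (k * (b - a)) - 1) * C := by
      rw [intervalIntegral.integral_mul_const, hexp]

theorem le_exp_mul_add_integral_trans {g : ℝ → ℝ} {k a b c V₀ V₁ V₂ : ℝ}
    (hab : IntervalIntegrable g volume a b) (hbc : IntervalIntegrable g volume b c)
    (h₁ : V₁ ≤ Real.exp (k * (b - a)) * V₀ + ∫ s in a..b, Real.exp (k * (b - s)) * g s)
    (h₂ : V₂ ≤ Real.exp (k * (c - b)) * V₁ + ∫ s in b..c, Real.exp (k * (c - s)) * g s) :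
    V₂ ≤ Real.exp (k * (c - a)) * V₀ + ∫ s in a..c, Real.exp (k * (c - s)) * g s := by
  have hweight : Real.exp (k * (c - b)) * ∫ s in a..b, Real.exp (k * (b - s)) * g s
      = ∫ s in a..b, Real.exp (k * (c - s)) * g s := by
    rw [← intervalIntegral.integral_const_mul]
    congr 1 with s
    rw [← mul_assoc, ← Real.exp_add]
    ring_nf
  have hsplit := intervalIntegral.integral_add_adjacent_intervals
    (hab.continuousOn_mul (g := fun s => Real.exp (k * (c - s))) (by fun_prop))
    (hbc.continuousOn_mul (g := fun s => Real.exp (k * (c - s))) (by fun_prop))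
  have hexp : Real.exp (k * (c - b)) * Real.exp (k * (b - a)) = Real.exp (k * (c - a)) := by
    rw [← Real.exp_add]; ring_nf
  have h₁' := mul_le_mul_of_nonneg_left h₁ (Real.exp_nonneg (k * (c - b)))
  rw [mul_add, ← mul_assoc, hexp, hweight] at h₁'
  linarith

theorem le_exp_mul_add_integral_of_step {V : ℕ → ℝ} {g : ℝ → ℝ} {k t₀ h V₀ : ℝ} {N : ℕ}
    (hh : 0 ≤ h) (hg : IntervalIntegrable g volume t₀ (t₀ + N * h)) (hV₀ : V 0 ≤ V₀)
    (hstep : ∀ i < N,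
      V i ≤ Real.exp (k * i * h) * V₀
        + ∫ s in t₀..t₀ + i * h, Real.exp (k * (t₀ + i * h - s)) * g s →
      V (i + 1) ≤ Real.exp (k * h) * V i
        + ∫ s in t₀ + i * h..t₀ + i * h + h, Real.exp (k * (t₀ + i * h + h - s)) * g s) :
    ∀ i ≤ N, V i ≤ Real.exp (k * i * h) * V₀
      + ∫ s in t₀..t₀ + i * h, Real.exp (k * (t₀ + i * h - s)) * g s := by
  have hmem : ∀ j ≤ N, t₀ + j * h ∈ uIcc t₀ (t₀ + N * h) := fun j hj =>
    Icc_subset_uIcc ⟨le_add_of_nonneg_right (by positivity),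
      add_le_add_right (mul_le_mul_of_nonneg_right (Nat.cast_le.2 hj) hh) _⟩
  have hsub : ∀ i j : ℕ, i ≤ N → j ≤ N → IntervalIntegrable g volume (t₀ + i * h) (t₀ + j * h) :=
    fun i j hi hj => hg.mono_set (uIcc_subset_uIcc (hmem i hi) (hmem j hj))
  intro i
  induction i with
  | zero => intro _; simpa using hV₀
  | succ i ih =>
    intro hi
    have hprev := ih (by omega)
    have hnext := hstep i hi hprev
    rw [show k * i * h = k * (t₀ + i * h - t₀) by ring] at hprev
    rw [show k * h = k * (t₀ + i * h + h - (t₀ + i * h)) by ring] at hnext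
    have := le_exp_mul_add_integral_trans (by simpa using hsub 0 i (by omega) (by omega))
      (by simpa [add_mul, add_assoc] using hsub i (i + 1) (by omega) hi) hprev hnext
    rw [show t₀ + ((i + 1 : ℕ) : ℝ) * h = t₀ + i * h + h by push_cast; ring,
      show k * ((i + 1 : ℕ) : ℝ) * h = k * (t₀ + i * h + h - t₀) by push_cast; ring]
    exact this

section TimeDeriv
variable {F G : Type*} [NormedAddCommGroup G] [NormedSpace ℝ G]

def timeDeriv (V : ℝ → F → G) (t : ℝ) (x : F) : G :=
  derivWithin (fun s => V s x) (Ici 0) t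

theorem timeDeriv_eq_deriv {V : ℝ → F → G} {t : ℝ} (ht : 0 < t) (x : F) :
    timeDeriv V t x = deriv (fun s => V s x) t :=
  derivWithin_of_mem_nhds (Ici_mem_nhds ht)

end TimeDeriv

section UncurryDeriv
variable {F : Type*} [NormedAddCommGroup F] [NormedSpace ℝ F] {W : ℝ → F → ℝ} {s : ℝ} {y : F}

theorem hasDerivAt_const_add_smul (q v : F) (θ : ℝ) : HasDerivAt (fun θ : ℝ => q + θ • v) v θ := by
  simpa using ((hasDerivAt_id θ).smul_const v).const_add q

theorem hasDerivAt_fst_of_differentiableAt (hW : DifferentiableAt ℝ (uncurry W) (s, y)) :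
    HasDerivAt (fun s => W s y) (fderiv ℝ (uncurry W) (s, y) (1, 0)) s :=
  (hW.hasFDerivAt.comp_hasDerivAt s ((hasDerivAt_id' s).prodMk (hasDerivAt_const s y)) :)

theorem contDiffAt_uncurry_of_pos (hW : ContDiffOn ℝ 2 (uncurry W) (Ici 0 ×ˢ univ)) {q : ℝ × F}
    (hq : 0 < q.1) : ContDiffAt ℝ 2 (uncurry W) q :=
  hW.contDiffAt (prod_mem_nhds (Ici_mem_nhds hq) univ_mem)

theorem differentiableAt_uncurry_of_pos (hW : ContDiffOn ℝ 2 (uncurry W) (Ici 0 ×ˢ univ))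
    {q : ℝ × F} (hq : 0 < q.1) : DifferentiableAt ℝ (uncurry W) q :=
  (contDiffAt_uncurry_of_pos hW hq).differentiableAt two_ne_zero

theorem hasFDerivAt_fderiv_uncurry_of_pos (hW : ContDiffOn ℝ 2 (uncurry W) (Ici 0 ×ˢ univ))
    {q : ℝ × F} (hq : 0 < q.1) :
    HasFDerivAt (fderiv ℝ (uncurry W)) (fderiv ℝ (fderiv ℝ (uncurry W)) q) q :=
  (((contDiffAt_uncurry_of_pos hW hq).fderiv_right le_rfl).differentiableAt one_ne_zero).hasFDerivAt

theorem hasDerivAt_fderiv_uncurry_fst_of_pos (hW : ContDiffOn ℝ 2 (uncurry W) (Ici 0 ×ˢ univ))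
    (hs : 0 < s) :
    HasDerivAt (fun s => fderiv ℝ (uncurry W) (s, y))
      (fderiv ℝ (fderiv ℝ (uncurry W)) (s, y) (1, 0)) s :=
  ((hasFDerivAt_fderiv_uncurry_of_pos (q := (s, y)) hW hs).comp_hasDerivAt s
    ((hasDerivAt_id' s).prodMk (hasDerivAt_const s y)) :)

theorem hasDerivAt_fderivWithin_uncurry_line (hW : ContDiffOn ℝ 2 (uncurry W) (Ici 0 ×ˢ univ))
    (q v : ℝ × F) {θ : ℝ} (hθ : 0 < (q + θ • v).1) :
    HasDerivAt (fun θ => fderivWithin ℝ (uncurry W) (Ici 0 ×ˢ univ) (q + θ • v) v)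
      (fderiv ℝ (fderiv ℝ (uncurry W)) (q + θ • v) v v) θ := by
  have hline := hasDerivAt_const_add_smul q v θ
  have hinterior : ∀ᶠ r in 𝓝 (q + θ • v),
      fderivWithin ℝ (uncurry W) (Ici 0 ×ˢ univ) r = fderiv ℝ (uncurry W) r := by
    filter_upwards [continuous_fst.continuousAt.eventually (lt_mem_nhds hθ)] with r hr
    exact fderivWithin_of_mem_nhds (prod_mem_nhds (Ici_mem_nhds hr) univ_mem)
  have hcomp := (HasFDerivAt.comp_hasDerivAt (F := ℝ × F) (E := (ℝ × F) →L[ℝ] ℝ) θ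
    (hasFDerivAt_fderiv_uncurry_of_pos hW hθ) hline).clm_apply (hasDerivAt_const θ v)
  refine (hcomp.congr_deriv (by simp)).congr_of_eventuallyEq ?_
  filter_upwards [hline.continuousAt.tendsto.eventually hinterior] with θ' hθ'
  simp only [comp_apply, hθ']

theorem timeDeriv_timeDeriv_eq (hW : ContDiffOn ℝ 2 (uncurry W) (Ici 0 ×ˢ univ)) (hs : 0 < s) :
    timeDeriv (timeDeriv W) s y = fderiv ℝ (fderiv ℝ (uncurry W)) (s, y) (1, 0) (1, 0) := by
  have hfirst : (fun s' => timeDeriv W s' y) =ᶠ[𝓝 s]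
      fun s' => fderiv ℝ (uncurry W) (s', y) (1, 0) := by
    filter_upwards [eventually_gt_nhds hs] with s' hs'
    rw [timeDeriv_eq_deriv hs',
      (hasDerivAt_fst_of_differentiableAt (differentiableAt_uncurry_of_pos hW hs')).deriv]
  rw [timeDeriv_eq_deriv hs, hfirst.deriv_eq]
  simpa using
    ((hasDerivAt_fderiv_uncurry_fst_of_pos hW hs).clm_apply (hasDerivAt_const s (1, 0))).deriv

end UncurryDeriv

section SecondOrder
variable {F : Type*} [NormedAddCommGroup F] [InnerProductSpace ℝ F] [CompleteSpace F]

/-- For `‖Δ‖ = b`, a bound for the second derivative of `θ ↦ W (t + θ a) (ξ + θ • Δ)`; the paper's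
`P s` dominates `1 + secondOrderTerm W 1 (s * L s) t ξ`. -/
def secondOrderTerm (W : ℝ → F → ℝ) (a b t : ℝ) (ξ : F) : ℝ :=
  a ^ 2 * |timeDeriv (timeDeriv W) t ξ| + 2 * a * b * ‖timeDeriv (fun s => gradient (W s)) t ξ‖
    + b ^ 2 * ‖fderiv ℝ (gradient (W t)) ξ‖

variable (F) in
def sndPartialGradient : ((ℝ × F) →L[ℝ] ℝ) →L[ℝ] F :=
  (toDual ℝ F).symm.toContinuousLinearEquiv.toContinuousLinearMap ∘L
    (ContinuousLinearMap.compL ℝ F (ℝ × F) ℝ).flip (ContinuousLinearMap.inr ℝ ℝ F)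

theorem inner_sndPartialGradient (φ : (ℝ × F) →L[ℝ] ℝ) (z : F) :
    inner ℝ (sndPartialGradient F φ) z = φ (0, z) := by
  simp [sndPartialGradient, toDual_symm_apply]

theorem apply_self_le_of_symm (D : (ℝ × F) →L[ℝ] (ℝ × F) →L[ℝ] ℝ)
    (hD : ∀ v w, D v w = D w v) (v : ℝ × F) :
    D v v ≤ v.1 ^ 2 * |D (1, 0) (1, 0)| + 2 * |v.1| * ‖v.2‖ * ‖sndPartialGradient F (D (1, 0))‖
      + ‖v.2‖ ^ 2 * ‖sndPartialGradient F ∘L D ∘L ContinuousLinearMap.inr ℝ ℝ F‖ := by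
  have hv : v = v.1 • ((1 : ℝ), (0 : F)) + ((0 : ℝ), v.2) := by ext <;> simp
  have hcross : |D (1, 0) (0, v.2)| ≤ ‖sndPartialGradient F (D (1, 0))‖ * ‖v.2‖ := by
    rw [← inner_sndPartialGradient]; exact abs_real_inner_le_norm _ _
  have hsnd : |D (0, v.2) (0, v.2)|
      ≤ ‖sndPartialGradient F ∘L D ∘L ContinuousLinearMap.inr ℝ ℝ F‖ * ‖v.2‖ * ‖v.2‖ := by
    rw [← inner_sndPartialGradient]
    exact (abs_real_inner_le_norm _ _).trans
      (mul_le_mul_of_nonneg_right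
        ((sndPartialGradient F ∘L D ∘L ContinuousLinearMap.inr ℝ ℝ F).le_opNorm v.2)
        (norm_nonneg _))
  have hexp : D v v = v.1 ^ 2 * D (1, 0) (1, 0) + 2 * v.1 * D (1, 0) (0, v.2)
      + D (0, v.2) (0, v.2) := by
    conv_lhs => rw [hv]
    simp only [map_add, map_smul, add_apply, FunLike.coe_smul,
      Pi.smul_apply, smul_eq_mul, hD (0, v.2) (1, 0)]
    ring
  rw [hexp]
  have h1 := mul_le_mul_of_nonneg_left (le_abs_self (D (1, 0) (1, 0))) (sq_nonneg v.1)
  have h2 : v.1 * D (1, 0) (0, v.2) ≤ |v.1| * (‖sndPartialGradient F (D (1, 0))‖ * ‖v.2‖) :=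
    (le_abs_self _).trans ((abs_mul _ _).trans_le (mul_le_mul_of_nonneg_left hcross (abs_nonneg _)))
  nlinarith [le_abs_self (D (0, v.2) (0, v.2))]

variable {W : ℝ → F → ℝ} {s : ℝ} {y : F}

theorem gradient_eq_sndPartialGradient (hW : DifferentiableAt ℝ (uncurry W) (s, y)) :
    gradient (W s) y = sndPartialGradient F (fderiv ℝ (uncurry W) (s, y)) := by
  have h : HasFDerivAt (W s) (fderiv ℝ (uncurry W) (s, y) ∘L ContinuousLinearMap.inr ℝ ℝ F) y :=
    hW.hasFDerivAt.comp y (hasFDerivAt_prodMk_right s y)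
  rw [gradient, h.fderiv]
  rfl

theorem timeDeriv_gradient_eq (hW : ContDiffOn ℝ 2 (uncurry W) (Ici 0 ×ˢ univ)) (hs : 0 < s) :
    timeDeriv (fun s => gradient (W s)) s y
      = sndPartialGradient F (fderiv ℝ (fderiv ℝ (uncurry W)) (s, y) (1, 0)) := by
  have hgrad : (fun s' => gradient (W s') y) =ᶠ[𝓝 s]
      fun s' => sndPartialGradient F (fderiv ℝ (uncurry W) (s', y)) := by
    filter_upwards [eventually_gt_nhds hs] with s' hs'
    exact gradient_eq_sndPartialGradient (differentiableAt_uncurry_of_pos hW hs')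
  have h : HasDerivAt (fun s => fderiv ℝ (uncurry W) (s, y))
      (fderiv ℝ (fderiv ℝ (uncurry W)) (s, y) (1, 0)) s :=
    hasDerivAt_fderiv_uncurry_fst_of_pos hW hs
  rw [timeDeriv_eq_deriv hs, hgrad.deriv_eq]
  exact (HasFDerivAt.comp_hasDerivAt (F := (ℝ × F) →L[ℝ] ℝ) s
    (sndPartialGradient F).hasFDerivAt h).deriv

theorem fderiv_gradient_eq (hW : ContDiffOn ℝ 2 (uncurry W) (Ici 0 ×ˢ univ)) (hs : 0 < s) :
    fderiv ℝ (gradient (W s)) y = sndPartialGradient F ∘L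
      fderiv ℝ (fderiv ℝ (uncurry W)) (s, y) ∘L ContinuousLinearMap.inr ℝ ℝ F := by
  have hgrad : gradient (W s) = fun y' => sndPartialGradient F (fderiv ℝ (uncurry W) (s, y')) :=
    funext fun y' => gradient_eq_sndPartialGradient (differentiableAt_uncurry_of_pos hW hs)
  have h := HasFDerivAt.comp (G := (ℝ × F) →L[ℝ] ℝ) y
    (hasFDerivAt_fderiv_uncurry_of_pos (q := (s, y)) hW hs) (hasFDerivAt_prodMk_right (𝕜 := ℝ) s y)
  rw [hgrad]
  exact ((sndPartialGradient F).hasFDerivAt.comp y h).fderiv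

theorem second_deriv_le_secondOrderTerm (hW : ContDiffOn ℝ 2 (uncurry W) (Ici 0 ×ˢ univ))
    (hs : 0 < s) (v : ℝ × F) :
    fderiv ℝ (fderiv ℝ (uncurry W)) (s, y) v v ≤ secondOrderTerm W |v.1| ‖v.2‖ s y := by
  rw [secondOrderTerm, timeDeriv_timeDeriv_eq hW hs, timeDeriv_gradient_eq hW hs,
    fderiv_gradient_eq hW hs, sq_abs]
  exact apply_self_le_of_symm _ ((contDiffAt_uncurry_of_pos hW hs).isSymmSndFDerivAt (by simp)) v

theorem fderivWithin_apply_eq (hW : DifferentiableOn ℝ (uncurry W) (Ici 0 ×ˢ univ)) {t : ℝ}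
    (ht : 0 ≤ t) (x : F) (v : ℝ × F) :
    fderivWithin ℝ (uncurry W) (Ici 0 ×ˢ univ) (t, x) v
      = v.1 * timeDeriv W t x + inner ℝ (gradient (W t) x) v.2 := by
  set D := fderivWithin ℝ (uncurry W) (Ici 0 ×ˢ univ) (t, x)
  have hD : HasFDerivWithinAt (uncurry W) D (Ici 0 ×ˢ univ) (t, x) :=
    (hW (t, x) (mk_mem_prod ht (mem_univ x))).hasFDerivWithinAt
  have htime : HasDerivWithinAt (fun s => W s x) (D (1, 0)) (Ici 0) t := by
    exact (hD.comp_hasDerivWithinAt t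
      ((hasDerivAt_id' t).prodMk (hasDerivAt_const t x)).hasDerivWithinAt
      (fun s hs => mk_mem_prod hs (mem_univ x)) :)
  have hspace : HasFDerivAt (W t) (D ∘L ContinuousLinearMap.inr ℝ ℝ F) x := by
    rw [← hasFDerivWithinAt_univ]
    exact hD.comp x (hasFDerivAt_prodMk_right t x).hasFDerivWithinAt (fun y _ => ⟨ht, mem_univ y⟩)
  have hv : v = v.1 • ((1 : ℝ), (0 : F)) + ((0 : ℝ), v.2) := by ext <;> simp
  rw [timeDeriv, htime.derivWithin (uniqueDiffOn_Ici 0 t ht), gradient, hspace.fderiv]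
  conv_lhs => rw [hv]
  rw [map_add, map_smul, smul_eq_mul, mul_comm, toDual_symm_apply]
  rfl

theorem le_taylor_of_secondOrderTerm_le (hW : ContDiffOn ℝ 2 (uncurry W) (Ici 0 ×ˢ univ))
    {t h K : ℝ} (ht : 0 ≤ t) (hh : 0 < h) (x Δ : F)
    (hK : ∀ θ ∈ Ioo (0:ℝ) 1, secondOrderTerm W h ‖Δ‖ (t + θ * h) (x + θ • Δ) ≤ K) :
    W (t + h) (x + Δ) ≤ W t x + (h * timeDeriv W t x + inner ℝ (gradient (W t) x) Δ) + K / 2 := by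
  have hγ : ∀ θ : ℝ, (t, x) + θ • (h, Δ) = (t + θ * h, x + θ • Δ) := fun θ => by simp [mul_comm]
  have hγ' := hasDerivAt_const_add_smul ((t, x) : ℝ × F) (h, Δ)
  have hγS : MapsTo (fun θ : ℝ => (t, x) + θ • (h, Δ)) (Icc 0 1) (Ici 0 ×ˢ univ) := fun θ hθ => by
    beta_reduce; rw [hγ]; exact ⟨add_nonneg ht (mul_nonneg hθ.1 hh.le), mem_univ _⟩
  have hpos : ∀ θ ∈ Ioo (0:ℝ) 1, 0 < t + θ * h := fun θ hθ =>
    add_pos_of_nonneg_of_pos ht (mul_pos hθ.1 hh)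
  have hWd : DifferentiableOn ℝ (uncurry W) (Ici 0 ×ˢ univ) := hW.differentiableOn two_ne_zero
  have key := le_add_deriv_add_half_of_deriv_le
    (G := uncurry W ∘ fun θ => (t, x) + θ • (h, Δ))
    (G' := fun θ => fderivWithin ℝ (uncurry W) (Ici 0 ×ˢ univ) ((t, x) + θ • (h, Δ)) (h, Δ))
    (fun θ hθ => (hWd _ (hγS hθ)).hasFDerivWithinAt.comp_hasDerivWithinAt θ
      (hγ' θ).hasDerivWithinAt hγS)
    (((hW.continuousOn_fderivWithin ((uniqueDiffOn_Ici 0).prod uniqueDiffOn_univ)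
      one_le_two).comp (fun θ _ => (hγ' θ).continuousAt.continuousWithinAt) hγS).clm_apply
        continuousOn_const)
    (fun θ hθ => hasDerivAt_fderivWithin_uncurry_line hW _ _ (by rw [hγ]; exact hpos θ hθ))
    (fun θ hθ => by
      have h2 := second_deriv_le_secondOrderTerm (y := x + θ • Δ) hW (hpos θ hθ) (h, Δ)
      rw [abs_of_pos hh, ← hγ] at h2
      exact h2.trans (hK θ hθ))
  simpa only [comp_apply, one_smul, zero_smul, add_zero, Prod.mk_add_mk, uncurry_apply_pair,
    fderivWithin_apply_eq hWd ht] using key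

end SecondOrder

theorem ContinuousOn.measurable_comp_norm {E : Type*} [NormedAddCommGroup E] [MeasurableSpace E]
    [OpensMeasurableSpace E] {p : ℝ → ℝ} (hp : ContinuousOn p (Ici 0)) {u : ℝ → E}
    (hu : Measurable u) : Measurable fun s => p ‖u s‖ := by
  have hmax : Continuous fun r : ℝ => p (max r 0) :=
    hp.comp_continuous (continuous_id.max continuous_const) fun r => le_max_right r 0
  have hcomp : (fun s => p ‖u s‖) = (fun r => p (max r 0)) ∘ fun s => ‖u s‖ :=
    funext fun s => by rw [comp_apply, max_eq_left (norm_nonneg (u s))]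
  exact hcomp ▸ hmax.measurable.comp hu.norm

theorem intervalIntegrable_of_ae_norm_le {E : Type*} [NormedAddCommGroup E] {g : ℝ → E}
    {a b C : ℝ} (hab : a ≤ b) (hg : AEStronglyMeasurable g (volume.restrict (Ioc a b)))
    (hC : ∀ᵐ s ∂volume.restrict (Icc a b), ‖g s‖ ≤ C) : IntervalIntegrable g volume a b :=
  (intervalIntegrable_iff_integrableOn_Ioc_of_le hab).2
    (Integrable.of_bound hg C (ae_restrict_of_ae_restrict_of_subset Ioc_subset_Icc_self hC))

theorem ContinuousOn.intervalIntegrable_comp_norm {E : Type*} [NormedAddCommGroup E]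
    [MeasurableSpace E] [OpensMeasurableSpace E] {p : ℝ → ℝ} (hpc : ContinuousOn p (Ici 0))
    (hpm : MonotoneOn p (Ici 0)) (hp_nonneg : ∀ r ≥ (0:ℝ), 0 ≤ p r) {u : ℝ → E}
    (hu : Measurable u)
    {a b R : ℝ} (hR : 0 ≤ R) (hab : a ≤ b) (huR : ∀ᵐ s ∂volume.restrict (Icc a b), ‖u s‖ ≤ R) :
    IntervalIntegrable (fun s => p ‖u s‖) volume a b :=
  intervalIntegrable_of_ae_norm_le hab (hpc.measurable_comp_norm hu).aestronglyMeasurable (by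
    filter_upwards [huR] with s hs
    rw [Real.norm_of_nonneg (hp_nonneg _ (norm_nonneg _))]
    exact hpm (norm_nonneg _) hR hs)

theorem norm_integral_le_mul_of_ae_norm_le {E : Type*} [NormedAddCommGroup E] [NormedSpace ℝ E]
    {φ : ℝ → E} {t h B : ℝ} (hh : 0 ≤ h) (hφB : ∀ᵐ s ∂volume.restrict (Icc t (t + h)), ‖φ s‖ ≤ B) :
    ‖∫ s in t..t + h, φ s‖ ≤ h * B := by
  have := intervalIntegral.norm_integral_le_of_norm_le_const_ae (a := t) (b := t + h) (C := B) (by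
    rw [uIoc_of_le (by linarith)]
    exact (ae_restrict_iff' measurableSet_Ioc).1
      (ae_restrict_of_ae_restrict_of_subset Ioc_subset_Icc_self hφB))
  rwa [add_sub_cancel_left, abs_of_nonneg hh, mul_comm] at this

section EulerStep
variable {F : Type*} [NormedAddCommGroup F] [InnerProductSpace ℝ F] [CompleteSpace F]

theorem secondOrderTerm_le_sq_mul (W : ℝ → F → ℝ) (t : ℝ) (ξ : F) {a b B : ℝ} (ha : 0 ≤ a)
    (hb : 0 ≤ b) (hbB : b ≤ a * B) :
    secondOrderTerm W a b t ξ ≤ a ^ 2 * secondOrderTerm W 1 B t ξ := by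
  have hb2 : b ^ 2 ≤ (a * B) ^ 2 := pow_le_pow_left₀ hb hbB 2
  have hA := abs_nonneg (timeDeriv (timeDeriv W) t ξ)
  have hG := norm_nonneg (timeDeriv (fun s => gradient (W s)) t ξ)
  have hH := norm_nonneg (fderiv ℝ (gradient (W t)) ξ)
  simp only [secondOrderTerm]
  nlinarith [mul_le_mul_of_nonneg_left hbB (mul_nonneg ha hG), mul_le_mul_of_nonneg_right hb2 hH]

theorem inner_integral_le_of_ae_le {φ : ℝ → F} {q : ℝ → ℝ} {g : F} {t h A K : ℝ} (hh : 0 ≤ h)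
    (hφ : IntervalIntegrable φ volume t (t + h)) (hq : IntervalIntegrable q volume t (t + h))
    (hle : ∀ᵐ s ∂volume.restrict (Icc t (t + h)), inner ℝ g (φ s) ≤ A + q s + (s - t) * K) :
    inner ℝ g (∫ s in t..t + h, φ s) ≤ A * h + (∫ s in t..t + h, q s) + K * h ^ 2 / 2 := by
  have hlin : IntervalIntegrable (fun s => (s - t) * K) volume t (t + h) :=
    ((continuous_id.sub continuous_const).mul continuous_const).intervalIntegrable _ _
  calc inner ℝ g (∫ s in t..t + h, φ s) = ∫ s in t..t + h, inner ℝ g (φ s) :=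
        ((innerSL ℝ g).intervalIntegral_comp_comm hφ).symm
    _ ≤ ∫ s in t..t + h, (A + q s + (s - t) * K) :=
        intervalIntegral.integral_mono_ae_restrict (by linarith)
          ⟨hφ.1.const_inner g, hφ.2.const_inner g⟩ ((intervalIntegrable_const.add hq).add hlin) hle
    _ = A * h + (∫ s in t..t + h, q s) + K * h ^ 2 / 2 := by
      rw [intervalIntegral.integral_add (intervalIntegrable_const.add hq) hlin,
        intervalIntegral.integral_add intervalIntegrable_const hq, intervalIntegral.integral_const,
        intervalIntegral.integral_mul_const,
        intervalIntegral.integral_comp_sub_right (fun s => s), integral_id]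
      simp only [smul_eq_mul]
      ring

theorem euler_step_le {W : ℝ → F → ℝ} {φ ψ : ℝ → F} {q : ℝ → ℝ} {x : F} {c t h B K : ℝ}
    (hW : ContDiffOn ℝ 2 (uncurry W) (Ici 0 ×ˢ univ)) (hW1 : 1 ≤ W t x) (ht : 0 ≤ t) (hh : 0 < h)
    (hc : 0 < c) (hhK : h * K ≤ c)
    (hφ : IntervalIntegrable φ volume t (t + h)) (hq : IntervalIntegrable q volume t (t + h))
    (hq0 : ∀ᵐ s ∂volume.restrict (Icc t (t + h)), 0 ≤ q s)
    (hφB : ∀ᵐ s ∂volume.restrict (Icc t (t + h)), ‖φ s‖ ≤ B)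
    (hφψ : ∀ᵐ s ∂volume.restrict (Icc t (t + h)), ‖φ s - ψ s‖ ≤ (s - t) * √K)
    (hdiss : ∀ᵐ s ∂volume.restrict (Icc t (t + h)),
      timeDeriv W t x + inner ℝ (gradient (W t) x) (ψ s) ≤ c * W t x + q s)
    (hgrad : ‖gradient (W t) x‖ ≤ √K)
    (hsecond : ∀ s ≥ t, ∀ ξ, ‖ξ - x‖ ≤ h * B → secondOrderTerm W 1 B s ξ ≤ K - 1) :
    W (t + h) (x + ∫ s in t..t + h, φ s)
      ≤ Real.exp (2 * c * h) * W t x + ∫ s in t..t + h, Real.exp (2 * c * (t + h - s)) * q s := by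
  have hΔ := norm_integral_le_mul_of_ae_norm_le hh.le hφB
  have hK : 1 ≤ K := by
    have hB : 0 ≤ B := nonneg_of_mul_nonneg_right ((norm_nonneg _).trans hΔ) hh
    have := hsecond t le_rfl x (by rw [sub_self, norm_zero]; positivity)
    have : 0 ≤ secondOrderTerm W 1 B t x := by unfold secondOrderTerm; positivity
    linarith
  have hremainder : ∀ θ ∈ Ioo (0:ℝ) 1, secondOrderTerm W h ‖∫ s in t..t + h, φ s‖ (t + θ * h)
      (x + θ • ∫ s in t..t + h, φ s) ≤ h ^ 2 * (K - 1) := fun θ hθ => by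
    have hξ : ‖x + θ • (∫ s in t..t + h, φ s) - x‖ ≤ h * B := by
      rw [add_sub_cancel_left, norm_smul, Real.norm_of_nonneg hθ.1.le]
      exact (mul_le_of_le_one_left (norm_nonneg _) hθ.2.le).trans hΔ
    exact (secondOrderTerm_le_sq_mul W _ _ hh.le (norm_nonneg _) hΔ).trans
      (mul_le_mul_of_nonneg_left (hsecond _ (by nlinarith [hθ.1]) _ hξ) (sq_nonneg h))
  have htaylor := le_taylor_of_secondOrderTerm_le hW ht hh x _ hremainder
  have hinner := inner_integral_le_of_ae_le (g := gradient (W t) x) (K := K) hh.le hφ hq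
    (A := c * W t x - timeDeriv W t x) (by
      filter_upwards [hdiss, hφψ, ae_restrict_mem measurableSet_Icc] with s hds hs hst
      have hsplit : inner ℝ (gradient (W t) x) (φ s - ψ s) ≤ (s - t) * K := calc
        _ ≤ ‖gradient (W t) x‖ * ‖φ s - ψ s‖ := real_inner_le_norm _ _
        _ ≤ √K * ((s - t) * √K) := mul_le_mul hgrad hs (norm_nonneg _) (Real.sqrt_nonneg K)
        _ = (s - t) * K := by rw [mul_left_comm, Real.mul_self_sqrt (by linarith)]
      rw [inner_sub_right] at hsplit
      linarith)
  have hexp : 1 + 2 * c * h ≤ Real.exp (2 * c * h) := by linarith [Real.add_one_le_exp (2 * c * h)]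
  have hweight : ∫ s in t..t + h, q s ≤ ∫ s in t..t + h, Real.exp (2 * c * (t + h - s)) * q s := by
    refine intervalIntegral.integral_mono_ae_restrict (by linarith) hq
      (hq.continuousOn_mul (by fun_prop)) ?_
    filter_upwards [hq0, ae_restrict_mem measurableSet_Icc] with s hs hst
    exact le_mul_of_one_le_left hs (Real.one_le_exp (by nlinarith [hst.2]))
  linarith [mul_le_mul_of_nonneg_left hhK hh.le, mul_nonneg (mul_pos hc hh).le (sub_nonneg.2 hW1),
    mul_le_mul_of_nonneg_right hexp (zero_le_one.trans hW1), sq_nonneg h]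

theorem secondOrderTerm_one (W : ℝ → F → ℝ) (b t : ℝ) (ξ : F) :
    secondOrderTerm W 1 b t ξ = |timeDeriv (timeDeriv W) t ξ|
      + 2 * b * ‖timeDeriv (fun s => gradient (W s)) t ξ‖
        + b ^ 2 * ‖fderiv ℝ (gradient (W t)) ξ‖ := by
  simp only [secondOrderTerm, one_pow, one_mul, mul_one]

theorem euler_step_le_of_norm_le {U : Type*} [NormedAddCommGroup U] {f : ℝ → F → U → F}
    {W : ℝ → F → ℝ} {u : ℝ → U} {p P L : ℝ → ℝ} {c τ uB M t h : ℝ} {x : F}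
    (hW : ContDiffOn ℝ 2 (uncurry W) (Ici 0 ×ˢ univ)) (hW1 : ∀ t ≥ (0:ℝ), ∀ x, 1 ≤ W t x)
    (hc : 0 < c) (hLm : Monotone L) (hL1 : ∀ s, 1 ≤ L s)
    (hgr : ∀ t ≥ (0:ℝ), ∀ x u, ‖f t x u‖ ≤ (‖x‖ + ‖u‖) * L (‖x‖ + ‖u‖))
    (hdiss : ∀ t ≥ (0:ℝ), ∀ x u,
      timeDeriv W t x + inner ℝ (gradient (W t) x) (f t x u) ≤ c * W t x + p ‖u‖)
    (hp_nonneg : ∀ r ≥ (0:ℝ), 0 ≤ p r) (hPm : MonotoneOn P (Ici 0))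
    (hP1 : ∀ t ≥ (0:ℝ), ∀ ξ : F, ‖ξ‖ ≤ M * (1 + τ * L M) →
      1 + |timeDeriv (timeDeriv W) t ξ| + 2 * M * L M * ‖timeDeriv (fun s => gradient (W s)) t ξ‖
        + M ^ 2 * L M ^ 2 * ‖fderiv ℝ (gradient (W t)) ξ‖ ≤ P M)
    (hP2 : ∀ t ≥ (0:ℝ), ∀ x, ‖gradient (W t) x‖ ≤ √(P ‖x‖))
    (hP3 : ∀ t ≥ (0:ℝ), ∀ s ≥ t, ∀ x u, ‖f s x u - f t x u‖ ≤ (s - t) * √(P (‖x‖ + ‖u‖)))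
    (ht : 0 ≤ t) (hh : 0 < h) (hhτ : h ≤ τ) (hstep : h ≤ c / P M) (huB : 0 ≤ uB)
    (hxM : ‖x‖ + uB ≤ M) (hu : ∀ᵐ s ∂volume.restrict (Icc t (t + h)), ‖u s‖ ≤ uB)
    (hfm : AEStronglyMeasurable (fun s => f s x (u s)) (volume.restrict (Ioc t (t + h))))
    (hpu : IntervalIntegrable (fun s => p ‖u s‖) volume t (t + h)) :
    W (t + h) (x + ∫ s in t..t + h, f s x (u s))
      ≤ Real.exp (2 * c * h) * W t x
        + ∫ s in t..t + h, Real.exp (2 * c * (t + h - s)) * p ‖u s‖ := by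
  have hM : 0 ≤ M := by linarith [norm_nonneg x]
  have hhP : h * P M ≤ c := by
    rcases le_or_gt (P M) 0 with hP | hP
    · linarith [div_nonpos_of_nonneg_of_nonpos hc.le hP]
    · exact (le_div_iff₀ hP).1 hstep
  have hLM : 0 ≤ M * L M := mul_nonneg hM (zero_le_one.trans (hL1 M))
  have hφB : ∀ᵐ s ∂volume.restrict (Icc t (t + h)), ‖f s x (u s)‖ ≤ M * L M := by
    filter_upwards [hu, ae_restrict_mem measurableSet_Icc] with s hs hst
    have hle : ‖x‖ + ‖u s‖ ≤ M := by linarith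
    exact (hgr s (ht.trans hst.1) x (u s)).trans
      (mul_le_mul hle (hLm hle) (zero_le_one.trans (hL1 _)) hM)
  have hφψ : ∀ᵐ s ∂volume.restrict (Icc t (t + h)),
      ‖f s x (u s) - f t x (u s)‖ ≤ (s - t) * √(P M) := by
    filter_upwards [hu, ae_restrict_mem measurableSet_Icc] with s hs hst
    refine (hP3 t ht s hst.1 x (u s)).trans (mul_le_mul_of_nonneg_left (Real.sqrt_le_sqrt ?_)
      (sub_nonneg.2 hst.1))
    exact hPm (mem_Ici.2 (by positivity)) hM (by linarith)
  refine euler_step_le hW (hW1 t ht x) ht hh hc hhP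
    (intervalIntegrable_of_ae_norm_le (by linarith) hfm hφB) hpu
    (ae_of_all _ fun s => hp_nonneg _ (norm_nonneg _)) hφB hφψ
    (ae_of_all _ fun s => hdiss t ht x (u s))
    ((hP2 t ht x).trans (Real.sqrt_le_sqrt (hPm (norm_nonneg x) hM (by linarith))))
    fun s hs ξ hξ => ?_
  have hξ' : ‖ξ‖ ≤ M * (1 + τ * L M) := by
    nlinarith [norm_le_norm_add_norm_sub' ξ x, mul_le_mul_of_nonneg_right hhτ hLM]
  rw [secondOrderTerm_one]
  linarith [hP1 s (ht.trans hs) ξ hξ']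

end EulerStep

section APriori
variable {F : Type*} [NormedAddCommGroup F] [ProperSpace F]

theorem one_add_norm_le_of_le_exp_bound {U : Type*} [NormedAddCommGroup U]
    {W : ℝ → F → ℝ} {u : ℝ → U} {p Q : ℝ → ℝ} {c τ t₀ T uB : ℝ} {x₀ x : F}
    (hW : ContinuousOn (uncurry W) (Ici 0 ×ˢ univ)) (hW₀ : 0 ≤ W t₀ x₀) (hc : 0 < c)
    (hp_nonneg : ∀ r ≥ (0:ℝ), 0 ≤ p r) (hpm : MonotoneOn p (Ici 0))
    (hQ : ∀ s ≥ (0:ℝ), ∀ x : F, ∀ h t : ℝ, h ∈ Icc 0 τ → 0 ≤ t →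
      W (t + h) x ≤ Real.exp (2 * c * τ) * sSup ((fun y => W t y) '' {y | ‖y‖ ≤ s})
          + (2 * c)⁻¹ * Real.exp (2 * c * τ) * p s → 1 + ‖x‖ ≤ Q s)
    (ht₀ : 0 ≤ t₀) (hT : T ∈ Icc 0 τ) (huB : 0 ≤ uB)
    (hu : ∀ᵐ s ∂volume.restrict (Icc t₀ (t₀ + T)), ‖u s‖ ≤ uB)
    (hpu : IntervalIntegrable (fun s => p ‖u s‖) volume t₀ (t₀ + T))
    (hx : W (t₀ + T) x ≤ Real.exp (2 * c * T) * W t₀ x₀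
      + ∫ s in t₀..t₀ + T, Real.exp (2 * c * (t₀ + T - s)) * p ‖u s‖) :
    1 + ‖x‖ ≤ Q (‖x₀‖ + uB) := by
  have hs₀ : 0 ≤ ‖x₀‖ + uB := by positivity
  have hball : IsCompact {y : F | ‖y‖ ≤ ‖x₀‖ + uB} := by
    simpa only [Metric.closedBall, dist_zero_right] using isCompact_closedBall (0 : F) (‖x₀‖ + uB)
  have hsup : W t₀ x₀ ≤ sSup ((fun y => W t₀ y) '' {y | ‖y‖ ≤ ‖x₀‖ + uB}) :=
    le_csSup (hball.image_of_continuousOn (hW.comp (Continuous.prodMk_right t₀).continuousOn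
      fun y _ => mk_mem_prod ht₀ (mem_univ y))).bddAbove
      (mem_image_of_mem _ (by simpa using huB))
  have hexp : Real.exp (2 * c * T) ≤ Real.exp (2 * c * τ) :=
    Real.exp_le_exp.2 (by nlinarith [hT.2])
  have hint : ∫ s in t₀..t₀ + T, Real.exp (2 * c * (t₀ + T - s)) * p ‖u s‖
      ≤ (2 * c)⁻¹ * Real.exp (2 * c * τ) * p (‖x₀‖ + uB) := by
    refine (integral_exp_mul_sub_mul_le (by positivity) (by linarith [hT.1]) hpu
      (C := p uB) ?_).trans ?_
    · filter_upwards [hu] with s hs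
      exact hpm (norm_nonneg _) huB hs
    · rw [add_sub_cancel_left]
      have hexp₁ : 0 ≤ Real.exp (2 * c * T) - 1 := by
        linarith [Real.one_le_exp (by nlinarith [hT.1] : 0 ≤ 2 * c * T)]
      have hpuB : p uB ≤ p (‖x₀‖ + uB) := hpm huB hs₀ (by linarith [norm_nonneg x₀])
      have hc₂ : 0 ≤ (2 * c)⁻¹ := by positivity
      gcongr
      · exact hp_nonneg uB huB
      · linarith
  refine hQ _ hs₀ x T t₀ hT ht₀ ?_
  nlinarith [mul_le_mul hexp hsup hW₀ (Real.exp_nonneg _)]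

end APriori

end

theorem stmt_3
    {n m : ℕ}
    (f : ℝ → EuclideanSpace ℝ (Fin n) → EuclideanSpace ℝ (Fin m) → EuclideanSpace ℝ (Fin n))
    (hfc : Continuous fun q : ℝ × EuclideanSpace ℝ (Fin n) × EuclideanSpace ℝ (Fin m) =>
      f q.1 q.2.1 q.2.2)
    (L : ℝ → ℝ) (hLm : Monotone L) (hL1 : ∀ s, 1 ≤ L s)
    (hgr : ∀ t ≥ (0:ℝ), ∀ x u, ‖f t x u‖ ≤ (‖x‖ + ‖u‖) * L (‖x‖ + ‖u‖))
    (W : ℝ → EuclideanSpace ℝ (Fin n) → ℝ)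
    (hWC2 : ContDiffOn ℝ 2 (fun q : ℝ × EuclideanSpace ℝ (Fin n) => W q.1 q.2) (Ici 0 ×ˢ univ))
    (hW1 : ∀ t ≥ (0:ℝ), ∀ x, 1 ≤ W t x)
    (c : ℝ) (hc : 0 < c)
    (p : ℝ → ℝ) (hpc : ContinuousOn p (Ici 0)) (hpm : StrictMonoOn p (Ici 0))
    (hp0 : p 0 = 0)
    (hdiss : ∀ t ≥ (0:ℝ), ∀ x u,
      derivWithin (fun s => W s x) (Ici 0) t
        + (inner ℝ (gradient (fun y => W t y) x) (f t x u) : ℝ) ≤ c * W t x + p ‖u‖)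
    (τ : ℝ) (hτ : 0 < τ)
    (P : ℝ → ℝ) (hPm : MonotoneOn P (Ici 0))
    (hP1 : ∀ s ≥ (0:ℝ), ∀ t ≥ (0:ℝ), ∀ ξ : EuclideanSpace ℝ (Fin n),
      ‖ξ‖ ≤ s * (1 + τ * L s) →
      1 + |derivWithin (fun s' => derivWithin (fun s'' => W s'' ξ) (Ici 0) s') (Ici 0) t|
        + 2 * s * L s * ‖derivWithin (fun s' => gradient (fun y => W s' y) ξ) (Ici 0) t‖
        + s ^ 2 * L s ^ 2 * ‖fderiv ℝ (fun y => gradient (fun y' => W t y') y) ξ‖ ≤ P s)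
    (hP2 : ∀ t ≥ (0:ℝ), ∀ x, ‖gradient (fun y => W t y) x‖ ≤ Real.sqrt (P ‖x‖))
    (hP3 : ∀ t ≥ (0:ℝ), ∀ s ≥ t, ∀ x u,
      ‖f s x u - f t x u‖ ≤ (s - t) * Real.sqrt (P (‖x‖ + ‖u‖)))
    (Q : ℝ → ℝ → ℝ)
    (hQ : ∀ w ≥ (0:ℝ), ∀ s ≥ (0:ℝ), ∀ x : EuclideanSpace ℝ (Fin n), ∀ h t : ℝ,
      h ∈ Icc 0 w → 0 ≤ t →
      W (t + h) x ≤ Real.exp (2 * c * w) * sSup ((fun y => W t y) '' {y | ‖y‖ ≤ s})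
          + (2 * c)⁻¹ * Real.exp (2 * c * w) * p s →
      1 + ‖x‖ ≤ Q w s)
    (t0 : ℝ) (ht0 : 0 ≤ t0) (x0 : EuclideanSpace ℝ (Fin n))
    (u : ℝ → EuclideanSpace ℝ (Fin m)) (hum : Measurable u)
    (uB : ℝ) (huB0 : 0 ≤ uB)
    (huB : ∀ᵐ t ∂(volume.restrict (Icc t0 (t0 + τ))), ‖u t‖ ≤ uB)
    (N : ℕ) (hN : 0 < N) (h : ℝ) (hh : h = τ / N)
    (xs : ℕ → EuclideanSpace ℝ (Fin n)) (hxs0 : xs 0 = x0)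
    (hxs : ∀ i < N, xs (i + 1) = xs i +
      ∫ s in (t0 + (i : ℝ) * h)..(t0 + ((i : ℝ) + 1) * h), f s (xs i) (u s))
    (hstep : h ≤ c / P (Q τ (‖x0‖ + uB) + uB)) :
    ∀ i ≤ N, W (t0 + (i : ℝ) * h) (xs i)
      ≤ Real.exp (2 * c * (i : ℝ) * h) * W t0 x0
        + ∫ s in t0..(t0 + (i : ℝ) * h), Real.exp (2 * c * (t0 + (i : ℝ) * h - s)) * p ‖u s‖ := by
  have hh0 : 0 < h := hh ▸ div_pos hτ (Nat.cast_pos.2 hN)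
  have hNh : (N : ℝ) * h = τ := by rw [hh]; field_simp
  have hp_nonneg : ∀ r ≥ (0:ℝ), 0 ≤ p r := fun r hr =>
    hp0 ▸ hpm.monotoneOn (mem_Ici.2 le_rfl) hr hr
  have hu : ∀ a b, t0 ≤ a → b ≤ t0 + τ → ∀ᵐ s ∂volume.restrict (Icc a b), ‖u s‖ ≤ uB :=
    fun a b ha hb => ae_restrict_of_ae_restrict_of_subset (Icc_subset_Icc ha hb) huB
  have hpu : ∀ a b, t0 ≤ a → a ≤ b → b ≤ t0 + τ →
      IntervalIntegrable (fun s => p ‖u s‖) volume a b := fun a b ha hab hb =>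
    hpc.intervalIntegrable_comp_norm hpm.monotoneOn hp_nonneg hum huB0 hab (hu a b ha hb)
  refine le_exp_mul_add_integral_of_step (V := fun i => W (t0 + i * h) (xs i))
    (g := fun s => p ‖u s‖) hh0.le (hpu _ _ le_rfl (by nlinarith) (by rw [hNh]))
    (by simp [hxs0]) fun i hi hVi => ?_
  have hih : (i : ℝ) * h + h ≤ τ := by
    rw [← hNh]; nlinarith [show (i : ℝ) + 1 ≤ N by exact_mod_cast hi]
  have hih0 : 0 ≤ (i : ℝ) * h := by positivity
  have hx := one_add_norm_le_of_le_exp_bound hWC2.continuousOn (zero_le_one.trans (hW1 t0 ht0 x0))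
    hc hp_nonneg hpm.monotoneOn (hQ τ hτ.le) ht0 ⟨hih0, by linarith⟩ huB0
    (hu _ _ le_rfl (by linarith)) (hpu _ _ le_rfl (by linarith) (by linarith))
    (by rwa [mul_assoc (2 * c)] at hVi)
  show W (t0 + ((i + 1 : ℕ) : ℝ) * h) (xs (i + 1)) ≤ _
  rw [Nat.cast_succ, hxs i hi, show t0 + ((i : ℝ) + 1) * h = t0 + i * h + h by ring]
  exact euler_step_le_of_norm_le hWC2 hW1 hc hLm hL1 hgr hdiss hp_nonneg hPm
    (hP1 _ (by linarith [norm_nonneg (xs i)])) hP2 hP3 (by positivity) hh0 (by linarith) hstep huB0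
    (by linarith) (hu _ _ (by linarith) (by linarith))
    (hfc.measurable.comp (measurable_id.prodMk (measurable_const.prodMk hum))).aestronglyMeasurable
    (hpu _ _ (by linarith) (by linarith) (by linarith))
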